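/- Statistical hiding of the masked opening in share conversion: let ℓ and κ be natural numbers, let M = 2^(ℓ+κ), and let U be the distribution on ℤ of a uniformly random element of {0, 1, …, M-1}. For a natural number x, let P_x be the pushforward of U under u ↦ (x : ℤ) - u (the distribution of the opened masked value ε = x - r). Then for all natural numbers x, x' with x < 2^ℓ and x' < 2^ℓ, the statistical distance between P_x and P_{x'} is at most 2^(-κ); that is, (1/2) · Σ_{z ∈ ℤ} |P_x(z) - P_{x'}(z)| ≤ 2^(-κ). -/

import Mathlib

/-!
The opened value `x - r` is uniform on the window `(x - M, x]` of `M = 2^(ℓ+κ)` integers, so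
for two secrets the distributions are uniform on two windows shifted by `|x - x'| < 2^ℓ`.
Their pointwise difference is `1/M` on the symmetric difference of the windows, which has at
most `2 |x - x'|` elements, and vanishes elsewhere; hence the statistical distance is at most
`2^ℓ / M = 2^(-κ)`.
-/

open Finset
open scoped ENNReal symmDiff

theorem Int.range_sub_fin (x : ℤ) (M : ℕ) :
    Set.range (fun u : Fin M => x - u) = ↑(Finset.Ioc (x - M) x) := by
  ext z
  simp only [Set.mem_range, coe_Ioc, Set.mem_Ioc]
  constructor
  · rintro ⟨u, rfl⟩
    omega
  · intro hz
    exact ⟨⟨(x - z).toNat, by omega⟩, by simp only [Int.ofNat_toNat]; omega⟩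

namespace PMF

theorem map_uniformOfFintype_apply_of_injective {α β : Type*} [Fintype α] [Nonempty α]
    {f : α → β} (hf : f.Injective) (b : β) :
    (uniformOfFintype α).map f b
      = (Set.range f).indicator (fun _ => (Fintype.card α : ℝ≥0∞)⁻¹) b := by
  rw [map_apply]
  by_cases hb : b ∈ Set.range f
  · obtain ⟨a, rfl⟩ := hb
    rw [Set.indicator_of_mem (Set.mem_range_self a),
      tsum_eq_single a fun a' ha' => if_neg (hf.ne ha').symm, if_pos rfl,
      uniformOfFintype_apply]
  · rw [Set.indicator_of_notMem hb, ENNReal.tsum_eq_zero]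
    exact fun a => if_neg fun h => hb ⟨a, h.symm⟩

theorem map_intSub_uniformOfFintype_fin_toReal (x : ℤ) (M : ℕ) [NeZero M] (z : ℤ) :
    ((uniformOfFintype (Fin M)).map (fun u : Fin M => x - (u : ℤ)) z).toReal
      = (↑(Ioc (x - M) x) : Set ℤ).indicator (fun _ => (M : ℝ)⁻¹) z := by
  have hinj : (fun u : Fin M => x - u).Injective := fun u v h => Fin.ext (by simpa using h)
  rw [map_uniformOfFintype_apply_of_injective hinj, Int.range_sub_fin, Fintype.card_fin]
  exact (congrFun (Set.comp_indicator_const _ ENNReal.toReal ENNReal.toReal_zero) z).trans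
    (by simp)

end PMF

theorem tsum_abs_indicator_sub_indicator {β : Type*} [DecidableEq β] (s t : Finset β) (c : ℝ) :
    ∑' z, |(s : Set β).indicator (fun _ => c) z - (t : Set β).indicator (fun _ => c) z|
      = #(s ∆ t) * |c| := by
  calc ∑' z, |(s : Set β).indicator (fun _ => c) z - (t : Set β).indicator (fun _ => c) z|
      = ∑' z, (↑(s ∆ t) : Set β).indicator (fun _ => |c|) z := by
        congr 1 with z
        rw [← Set.abs_indicator_symmDiff, ← coe_symmDiff]
        exact congrFun (Set.comp_indicator_const c abs abs_zero) z
    _ = #(s ∆ t) * |c| := by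
        rw [← sum_eq_tsum_indicator, sum_const, nsmul_eq_mul]

theorem Int.card_symmDiff_Ioc_sub_le (a b : ℤ) (M : ℕ) :
    (#(Ioc (a - M) a ∆ Ioc (b - M) b) : ℤ) ≤ 2 * |b - a| := by
  wlog hab : a ≤ b generalizing a b
  · rw [symmDiff_comm, abs_sub_comm]
    exact this b a (by omega)
  have hsub : Ioc (a - M) a ∆ Ioc (b - M) b ⊆ Ioc a b ∪ Ioc (a - M) (b - M) := by
    intro z
    simp only [mem_symmDiff, mem_union, mem_Ioc]
    omega
  calc (#(Ioc (a - M) a ∆ Ioc (b - M) b) : ℤ)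
      ≤ #(Ioc a b) + #(Ioc (a - M) (b - M)) := by
        exact_mod_cast (card_le_card hsub).trans (card_union_le _ _)
    _ = 2 * |b - a| := by
        rw [Int.card_Ioc, Int.card_Ioc, abs_of_nonneg (by omega)]
        omega

/-- Statistical hiding of the masked opening in share conversion:
for secrets x, x' < 2^ℓ masked by a uniform r ∈ [0, 2^(ℓ+κ)), the distributions
of the opened values ε = x - r are within statistical distance 2^(-κ). -/
theorem share_conversion_statistical_hiding (ℓ κ : ℕ)
    (U : PMF ℤ)
    (hU : U = PMF.map (fun u : Fin (2 ^ (ℓ + κ)) => (u : ℤ))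
        (PMF.uniformOfFintype (Fin (2 ^ (ℓ + κ)))))
    (P : ℕ → PMF ℤ)
    (hP : ∀ x : ℕ, P x = PMF.map (fun u : ℤ => (x : ℤ) - u) U) :
    ∀ x x' : ℕ, x < 2 ^ ℓ → x' < 2 ^ ℓ →
      (1 / 2 : ℝ) * ∑' z : ℤ, |(P x z).toReal - (P x' z).toReal|
        ≤ (2 : ℝ) ^ (-(κ : ℤ)) := by
  intro x x' hx hx'
  set M := 2 ^ (ℓ + κ) with hM
  have hPx (y : ℕ) (z : ℤ) :
      (P y z).toReal
        = (↑(Ioc ((y : ℤ) - M) y) : Set ℤ).indicator (fun _ => (M : ℝ)⁻¹) z := by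
    rw [hP, hU, PMF.map_comp]
    exact PMF.map_intSub_uniformOfFintype_fin_toReal y M z
  simp_rw [hPx, tsum_abs_indicator_sub_indicator]
  have hshift : |(x' : ℤ) - x| ≤ 2 ^ ℓ := by
    zify at hx hx'
    exact abs_le.mpr ⟨by omega, by omega⟩
  have hcard : (#(Ioc ((x : ℤ) - M) x ∆ Ioc ((x' : ℤ) - M) x') : ℤ) ≤ 2 * 2 ^ ℓ :=
    (Int.card_symmDiff_Ioc_sub_le x x' M).trans (by linarith)
  calc 1 / 2 * (#(Ioc ((x : ℤ) - M) x ∆ Ioc ((x' : ℤ) - M) x') * |(M : ℝ)⁻¹|)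
      ≤ 1 / 2 * (2 * 2 ^ ℓ * (M : ℝ)⁻¹) := by
        rw [abs_of_pos (by positivity)]
        gcongr
        exact_mod_cast hcard
    _ = (2 : ℝ) ^ (-(κ : ℤ)) := by
        rw [zpow_neg, zpow_natCast, hM]
        push_cast
        rw [pow_add]
        field_simp
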